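/- arXiv:2310.16284 — 2 statements merged into one kernel-verified Lean document; each statement's English description precedes it below -/
import Mathlib

section
/- Let n ≥ 1 and q ≥ 1. Let X ∈ ℝ^n, C ∈ ℝ^{n×q}, and form the design matrix X̃ = [X, C] ∈ ℝ^{n×(q+1)}. Let W ∈ ℝ^{n×(q+1)} satisfy det(Wᵀ X̃) ≠ 0. Let S be a nonempty set, let α, α' : S → ℝ, ζ_k, ζ'_k : S → ℝ for k = 1,…,q, and η_i, η'_i : S → ℝ for i = 1,…,n, and let b ∈ ℝ^{q+1} be such that for every s ∈ S and every t ∈ {1,…,q+1}, Σ_{i=1}^n W_{i,t} η_i(s) = b_t and Σ_{i=1}^n W_{i,t} η'_i(s) = b_t. If for every i ∈ {1,…,n} and every s ∈ S, α(s) X_i + Σ_{k=1}^q ζ_k(s) C_{i,k} + η_i(s) = α'(s) X_i + Σ_{k=1}^q ζ'_k(s) C_{i,k} + η'_i(s), then α = α', ζ_k = ζ'_k for every k, and η_i = η'_i for every i. (Identifiability of the spatially varying coefficient mediator model, Proposition 1(a).) -/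
open Matrix BigOperators

/-- Identifiability of the spatially varying coefficient mediator model
(Proposition 1(a)). -/
theorem mediator_model_identifiability
    (n q : ℕ) (hn : 1 ≤ n) (hq : 1 ≤ q)
    (X : Fin n → ℝ) (C : Matrix (Fin n) (Fin q) ℝ)
    (Xt : Matrix (Fin n) (Fin (q + 1)) ℝ)
    (hXt : ∀ i, Xt i = Fin.cons (X i) (C i))
    (W : Matrix (Fin n) (Fin (q + 1)) ℝ)
    (hdet : (Wᵀ * Xt).det ≠ 0)
    {S : Type*} [Nonempty S]
    (α α' : S → ℝ) (ζ ζ' : Fin q → S → ℝ) (η η' : Fin n → S → ℝ)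
    (b : Fin (q + 1) → ℝ)
    (hη : ∀ (s : S) (t : Fin (q + 1)), ∑ i, W i t * η i s = b t)
    (hη' : ∀ (s : S) (t : Fin (q + 1)), ∑ i, W i t * η' i s = b t)
    (heq : ∀ (i : Fin n) (s : S),
      α s * X i + ∑ k, ζ k s * C i k + η i s
        = α' s * X i + ∑ k, ζ' k s * C i k + η' i s) :
    α = α' ∧ (∀ k, ζ k = ζ' k) ∧ (∀ i, η i = η' i) := by
  set β : S → Fin (q + 1) → ℝ :=
    fun s => Fin.cons (α s - α' s) (fun k => ζ k s - ζ' k s) with hβ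
  have hXtβ : ∀ (s : S) (i : Fin n),
      Xt.mulVec (β s) i = η' i s - η i s := by
    intro s i
    have h := heq i s
    simp only [Matrix.mulVec, dotProduct, hXt i, hβ]
    rw [Fin.sum_univ_succ]
    simp only [Fin.cons_zero, Fin.cons_succ]
    have : ∑ k, C i k * (ζ k s - ζ' k s)
        = ∑ k, ζ k s * C i k - ∑ k, ζ' k s * C i k := by
      rw [← Finset.sum_sub_distrib]; congr 1; ext k; ring
    rw [this]; linarith
  have hzero : ∀ s : S, (Wᵀ * Xt).mulVec (β s) = 0 := by
    intro s
    rw [← Matrix.mulVec_mulVec]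
    ext t
    have : Xt.mulVec (β s) = fun i => η' i s - η i s := by
      funext i; exact hXtβ s i
    rw [this]
    simp only [Matrix.mulVec, dotProduct, Matrix.transpose_apply,
      Pi.zero_apply]
    have : ∑ i, W i t * (η' i s - η i s)
        = (∑ i, W i t * η' i s) - ∑ i, W i t * η i s := by
      rw [← Finset.sum_sub_distrib]; congr 1; ext i; ring
    rw [this, hη s t, hη' s t]; ring
  have hβzero : ∀ s : S, β s = 0 := by
    intro s
    have hinv := Matrix.nonsing_inv_mul (Wᵀ * Xt) (isUnit_iff_ne_zero.mpr hdet)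
    have : (Wᵀ * Xt)⁻¹.mulVec ((Wᵀ * Xt).mulVec (β s)) = β s := by
      rw [Matrix.mulVec_mulVec, hinv, Matrix.one_mulVec]
    rw [hzero s, Matrix.mulVec_zero] at this
    exact this.symm
  have hα : α = α' := by
    funext s
    have := congrFun (hβzero s) 0
    simp only [hβ, Fin.cons_zero, Pi.zero_apply] at this
    linarith
  have hζ : ∀ k, ζ k = ζ' k := by
    intro k
    funext s
    have := congrFun (hβzero s) k.succ
    simp only [hβ, Fin.cons_succ, Pi.zero_apply] at this
    linarith
  refine ⟨hα, hζ, fun i => ?_⟩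
  funext s
  have h := heq i s
  rw [hα] at h
  have hsum : ∑ k, ζ k s * C i k = ∑ k, ζ' k s * C i k := by
    congr 1; ext k; rw [hζ k]
  rw [hsum] at h
  linarith
end

section
/- Let n, k, L ≥ 1, X̃ ∈ ℝ^{n×k}, Θ ∈ ℝ^{n×L}, θ ∈ ℝ^{k×L}, and set W = [X̃θ + Θ, X̃] ∈ ℝ^{n×(L+k)}. Assume Θᵀ X̃ = 0 and that A := X̃ᵀX̃ and B := ΘᵀΘ are invertible. Then, with ‖·‖ denoting the ℓ₂ operator norm, ‖(WᵀW)^{-1}‖ ≤ ‖B^{-1}‖ · (1 + ‖θ‖)² + ‖A^{-1}‖. -/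
open Matrix BigOperators

/-- ℓ₂ operator norm of a matrix: `‖M‖ = sup_{‖u‖₂=1} ‖Mu‖₂`. -/
noncomputable def opN {m n : Type*} [Fintype m] [Fintype n]
    (M : Matrix m n ℝ) : ℝ :=
  ⨆ u : {u : n → ℝ // Real.sqrt (∑ j, u j ^ 2) = 1},
    Real.sqrt (∑ i, (M.mulVec u.1) i ^ 2)

open scoped Matrix.Norms.L2Operator

section Aux

lemma enorm_eq {m : Type*} [Fintype m] (y : EuclideanSpace ℝ m) :
    ‖y‖ = Real.sqrt (∑ i, y i ^ 2) := by
  rw [EuclideanSpace.norm_eq]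
  congr 1
  exact Finset.sum_congr rfl fun i _ => by rw [Real.norm_eq_abs, sq_abs]

lemma sqrt_sum_smul {e : Type*} [Fintype e] (y : e → ℝ) (t : ℝ) (ht : 0 ≤ t) :
    Real.sqrt (∑ i, (t • y) i ^ 2) = t * Real.sqrt (∑ i, y i ^ 2) := by
  have : (∑ i, (t • y) i ^ 2) = t ^ 2 * ∑ i, y i ^ 2 := by
    rw [Finset.mul_sum]
    exact Finset.sum_congr rfl fun i _ => by simp [mul_pow]
  rw [this, Real.sqrt_mul (sq_nonneg t), Real.sqrt_sq ht]

lemma sqrt_tri {e : Type*} [Fintype e] (y z : e → ℝ) :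
    Real.sqrt (∑ i, (y + z) i ^ 2) ≤
      Real.sqrt (∑ i, y i ^ 2) + Real.sqrt (∑ i, z i ^ 2) := by
  have := norm_add_le ((EuclideanSpace.equiv e ℝ).symm y) ((EuclideanSpace.equiv e ℝ).symm z)
  rw [show (EuclideanSpace.equiv e ℝ).symm y + (EuclideanSpace.equiv e ℝ).symm z
      = (EuclideanSpace.equiv e ℝ).symm (y + z) by rfl] at this
  rw [enorm_eq, enorm_eq, enorm_eq] at this
  exact this

lemma sqrt_add_le (a b : ℝ) (ha : 0 ≤ a) (hb : 0 ≤ b) :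
    Real.sqrt (a + b) ≤ Real.sqrt a + Real.sqrt b := by
  rw [← Real.sqrt_sq (by positivity : (0:ℝ) ≤ Real.sqrt a + Real.sqrt b)]
  apply Real.sqrt_le_sqrt
  nlinarith [Real.sq_sqrt ha, Real.sq_sqrt hb, Real.sqrt_nonneg a, Real.sqrt_nonneg b]

variable {m n : Type*} [Fintype m] [Fintype n] [DecidableEq n]

lemma mulVec_norm_le (M : Matrix m n ℝ) (x : n → ℝ) :
    Real.sqrt (∑ i, (M.mulVec x) i ^ 2) ≤ ‖M‖ * Real.sqrt (∑ j, x j ^ 2) := by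
  have := M.l2_opNorm_mulVec ((EuclideanSpace.equiv n ℝ).symm x)
  rw [enorm_eq, enorm_eq] at this
  exact this

lemma opN_eq_norm [Nonempty n] (M : Matrix m n ℝ) : opN M = ‖M‖ := by
  have hunit : ∃ u : n → ℝ, Real.sqrt (∑ j, u j ^ 2) = 1 := by
    obtain ⟨j0⟩ := ‹Nonempty n›
    refine ⟨Pi.single j0 1, ?_⟩
    rw [show (∑ j, (Pi.single j0 1 : n → ℝ) j ^ 2) = 1 by
      rw [Finset.sum_eq_single j0] <;> simp +contextual [Pi.single_apply]]
    exact Real.sqrt_one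
  have hne : Nonempty {u : n → ℝ // Real.sqrt (∑ j, u j ^ 2) = 1} :=
    ⟨⟨hunit.choose, hunit.choose_spec⟩⟩
  have hbdd : BddAbove (Set.range fun u : {u : n → ℝ // Real.sqrt (∑ j, u j ^ 2) = 1} =>
      Real.sqrt (∑ i, (M.mulVec u.1) i ^ 2)) := by
    refine ⟨‖M‖, ?_⟩
    rintro x ⟨u, rfl⟩
    have := mulVec_norm_le M u.1
    rwa [u.2, mul_one] at this
  have hopN : 0 ≤ opN M := Real.iSup_nonneg fun u => Real.sqrt_nonneg _
  apply le_antisymm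
  · apply ciSup_le
    intro u
    have := mulVec_norm_le M u.1
    rwa [u.2, mul_one] at this
  · rw [l2_opNorm_def]
    apply ContinuousLinearMap.opNorm_le_bound _ hopN
    intro x
    have hfx : ‖(Matrix.toEuclideanLin.trans LinearMap.toContinuousLinearMap M) x‖ =
        Real.sqrt (∑ i, (M.mulVec x) i ^ 2) := enorm_eq _
    have hxn : ‖x‖ = Real.sqrt (∑ j, x j ^ 2) := enorm_eq x
    rw [hfx, hxn]
    by_cases hx : ∀ j, x j = 0
    · have h0 : (∑ i, (M.mulVec x) i ^ 2) = 0 := by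
        simp [Matrix.mulVec, dotProduct, hx]
      rw [h0, Real.sqrt_zero]
      exact mul_nonneg hopN (Real.sqrt_nonneg _)
    push_neg at hx
    obtain ⟨j1, hj1⟩ := hx
    set c : ℝ := Real.sqrt (∑ j, x j ^ 2) with hc
    have hs : (0 : ℝ) < ∑ j, x j ^ 2 := by
      apply Finset.sum_pos' (fun j _ => sq_nonneg _)
      exact ⟨j1, Finset.mem_univ _, by positivity⟩
    have hcpos : 0 < c := Real.sqrt_pos.mpr hs
    set u : n → ℝ := c⁻¹ • (x : n → ℝ) with hu
    have huunit : Real.sqrt (∑ j, u j ^ 2) = 1 := by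
      rw [hu, sqrt_sum_smul (x : n → ℝ) c⁻¹ (by positivity), ← hc,
        inv_mul_cancel₀ (ne_of_gt hcpos)]
    have hMu : M.mulVec u = c⁻¹ • M.mulVec x := by
      rw [hu]
      exact Matrix.mulVec_smul M c⁻¹ (x : n → ℝ)
    have hle : Real.sqrt (∑ i, (M.mulVec u) i ^ 2) ≤ opN M :=
      le_ciSup hbdd (⟨u, huunit⟩ : {u : n → ℝ // Real.sqrt (∑ j, u j ^ 2) = 1})
    rw [hMu, sqrt_sum_smul _ _ (by positivity)] at hle
    calc Real.sqrt (∑ i, (M.mulVec x) i ^ 2)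
        = c * (c⁻¹ * Real.sqrt (∑ i, (M.mulVec x) i ^ 2)) := by
          rw [← mul_assoc, mul_inv_cancel₀ (ne_of_gt hcpos), one_mul]
      _ ≤ c * opN M := mul_le_mul_of_nonneg_left hle (le_of_lt hcpos)
      _ = opN M * c := mul_comm _ _

end Aux

section Blocks

variable {l k p q : Type*} [Fintype l] [Fintype k] [Fintype p] [Fintype q]
  [DecidableEq l] [DecidableEq k] [DecidableEq p] [DecidableEq q]

set_option maxHeartbeats 1000000 in
lemma norm_fromBlocks_le (P : Matrix p l ℝ) (Q : Matrix p k ℝ)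
    (R : Matrix q l ℝ) (S : Matrix q k ℝ) :
    ‖Matrix.fromBlocks P Q R S‖ ≤ ‖P‖ + ‖Q‖ + ‖R‖ + ‖S‖ := by
  rw [l2_opNorm_def]
  apply ContinuousLinearMap.opNorm_le_bound _
    (by have := norm_nonneg P; have := norm_nonneg Q; have := norm_nonneg R;
        have := norm_nonneg S; linarith)
  intro x
  set M := Matrix.fromBlocks P Q R S with hM
  have hfx : ‖(Matrix.toEuclideanLin.trans LinearMap.toContinuousLinearMap M) x‖ =
      Real.sqrt (∑ i, (M.mulVec x) i ^ 2) := enorm_eq _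
  have hxn : ‖x‖ = Real.sqrt (∑ j, (x : l ⊕ k → ℝ) j ^ 2) := enorm_eq x
  set x₁ : l → ℝ := fun i => x (Sum.inl i) with hx1
  set x₂ : k → ℝ := fun i => x (Sum.inr i) with hx2
  have hxe : (x : l ⊕ k → ℝ) = Sum.elim x₁ x₂ := by
    funext j; cases j <;> rfl
  have hmv : M.mulVec (x : l ⊕ k → ℝ) =
      Sum.elim (P.mulVec x₁ + Q.mulVec x₂) (R.mulVec x₁ + S.mulVec x₂) := by
    rw [hM, hxe, Matrix.fromBlocks_mulVec]
    simp [Sum.elim_comp_inl, Sum.elim_comp_inr]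
  have hx1le : Real.sqrt (∑ j, x₁ j ^ 2) ≤ ‖x‖ := by
    rw [hxn]
    apply Real.sqrt_le_sqrt
    rw [Fintype.sum_sum_type]
    have h1 : ∀ i, (x : l ⊕ k → ℝ) (Sum.inl i) = x₁ i := fun i => rfl
    simp only [h1]
    have h2 : (0:ℝ) ≤ ∑ i, (x : l ⊕ k → ℝ) (Sum.inr i) ^ 2 :=
      Finset.sum_nonneg fun i _ => sq_nonneg _
    linarith
  have hx2le : Real.sqrt (∑ j, x₂ j ^ 2) ≤ ‖x‖ := by
    rw [hxn]
    apply Real.sqrt_le_sqrt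
    rw [Fintype.sum_sum_type]
    have h2 : (0:ℝ) ≤ ∑ i, (x : l ⊕ k → ℝ) (Sum.inl i) ^ 2 :=
      Finset.sum_nonneg fun i _ => sq_nonneg _
    have h1 : ∀ i, (x : l ⊕ k → ℝ) (Sum.inr i) = x₂ i := fun i => rfl
    simp only [h1]
    linarith
  rw [hfx]
  have key : Real.sqrt (∑ i, (M.mulVec x) i ^ 2)
      ≤ Real.sqrt (∑ i, ((P.mulVec x₁ + Q.mulVec x₂)) i ^ 2)
        + Real.sqrt (∑ i, ((R.mulVec x₁ + S.mulVec x₂)) i ^ 2) := by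
    have hsplit : (∑ i, (M.mulVec x) i ^ 2)
        = (∑ i, ((P.mulVec x₁ + Q.mulVec x₂)) i ^ 2)
          + (∑ i, ((R.mulVec x₁ + S.mulVec x₂)) i ^ 2) := by
      rw [show (M.mulVec x : p ⊕ q → ℝ) =
        Sum.elim (P.mulVec x₁ + Q.mulVec x₂) (R.mulVec x₁ + S.mulVec x₂) from hmv,
        Fintype.sum_sum_type]
      simp
    rw [hsplit]
    exact sqrt_add_le _ _ (Finset.sum_nonneg fun i _ => sq_nonneg _)
      (Finset.sum_nonneg fun i _ => sq_nonneg _)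
  have b1 : Real.sqrt (∑ i, ((P.mulVec x₁ + Q.mulVec x₂)) i ^ 2)
      ≤ ‖P‖ * ‖x‖ + ‖Q‖ * ‖x‖ := by
    calc Real.sqrt (∑ i, ((P.mulVec x₁ + Q.mulVec x₂)) i ^ 2)
        ≤ Real.sqrt (∑ i, (P.mulVec x₁) i ^ 2) + Real.sqrt (∑ i, (Q.mulVec x₂) i ^ 2) :=
          sqrt_tri _ _
      _ ≤ ‖P‖ * Real.sqrt (∑ j, x₁ j ^ 2) + ‖Q‖ * Real.sqrt (∑ j, x₂ j ^ 2) :=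
          add_le_add (mulVec_norm_le P x₁) (mulVec_norm_le Q x₂)
      _ ≤ ‖P‖ * ‖x‖ + ‖Q‖ * ‖x‖ :=
          add_le_add (mul_le_mul_of_nonneg_left hx1le (norm_nonneg _))
            (mul_le_mul_of_nonneg_left hx2le (norm_nonneg _))
  have b2 : Real.sqrt (∑ i, ((R.mulVec x₁ + S.mulVec x₂)) i ^ 2)
      ≤ ‖R‖ * ‖x‖ + ‖S‖ * ‖x‖ := by
    calc Real.sqrt (∑ i, ((R.mulVec x₁ + S.mulVec x₂)) i ^ 2)
        ≤ Real.sqrt (∑ i, (R.mulVec x₁) i ^ 2) + Real.sqrt (∑ i, (S.mulVec x₂) i ^ 2) :=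
          sqrt_tri _ _
      _ ≤ ‖R‖ * Real.sqrt (∑ j, x₁ j ^ 2) + ‖S‖ * Real.sqrt (∑ j, x₂ j ^ 2) :=
          add_le_add (mulVec_norm_le R x₁) (mulVec_norm_le S x₂)
      _ ≤ ‖R‖ * ‖x‖ + ‖S‖ * ‖x‖ :=
          add_le_add (mul_le_mul_of_nonneg_left hx1le (norm_nonneg _))
            (mul_le_mul_of_nonneg_left hx2le (norm_nonneg _))
  calc Real.sqrt (∑ i, (M.mulVec x) i ^ 2)
      ≤ (‖P‖ * ‖x‖ + ‖Q‖ * ‖x‖) + (‖R‖ * ‖x‖ + ‖S‖ * ‖x‖) := key.trans (add_le_add b1 b2)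
    _ = (‖P‖ + ‖Q‖ + ‖R‖ + ‖S‖) * ‖x‖ := by ring

lemma norm_transpose_real (M : Matrix p l ℝ) : ‖Mᵀ‖ = ‖M‖ := by
  have h : Mᵀ = Mᴴ := by
    ext i j
    simp [Matrix.conjTranspose_apply]
  rw [h, Matrix.l2_opNorm_conjTranspose]

end Blocks

/-- Deterministic bound in the proof of Proposition S.2:
`‖(WᵀW)⁻¹‖ ≤ ‖B⁻¹‖(1 + ‖θ‖)² + ‖A⁻¹‖`. -/
theorem gram_inverse_opNorm_bound
    (n k L : ℕ) (hn : 1 ≤ n) (hk : 1 ≤ k) (hL : 1 ≤ L)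
    (Xt : Matrix (Fin n) (Fin k) ℝ) (Θ : Matrix (Fin n) (Fin L) ℝ)
    (θ : Matrix (Fin k) (Fin L) ℝ)
    (W : Matrix (Fin n) (Fin L ⊕ Fin k) ℝ)
    (hW : W = Matrix.fromCols (Xt * θ + Θ) Xt)
    (A : Matrix (Fin k) (Fin k) ℝ) (hA : A = Xtᵀ * Xt)
    (B : Matrix (Fin L) (Fin L) ℝ) (hB : B = Θᵀ * Θ)
    (horth : Θᵀ * Xt = 0)
    (hAinv : IsUnit A.det) (hBinv : IsUnit B.det) :
    opN ((Wᵀ * W)⁻¹) ≤ opN (B⁻¹) * (1 + opN θ) ^ 2 + opN (A⁻¹) := by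
  have hL' : Nonempty (Fin L) := ⟨⟨0, hL⟩⟩
  have hk' : Nonempty (Fin k) := ⟨⟨0, hk⟩⟩
  have hA' : A * A⁻¹ = 1 := Matrix.mul_nonsing_inv A hAinv
  have hB' : B * B⁻¹ = 1 := Matrix.mul_nonsing_inv B hBinv
  have hXtΘ : Xtᵀ * Θ = 0 := by
    have := congrArg Matrix.transpose horth
    simpa [Matrix.transpose_mul] using this
  -- compute WᵀW
  have hWW : Wᵀ * W = Matrix.fromBlocks (θᵀ * A * θ + B) (θᵀ * A) (A * θ) A := by
    rw [hW, Matrix.transpose_fromCols, Matrix.fromRows_mul_fromCols,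
      Matrix.fromBlocks_inj]
    refine ⟨?_, ?_, ?_, ?_⟩
    · rw [hA, hB, Matrix.transpose_add, Matrix.transpose_mul, Matrix.add_mul,
        Matrix.mul_add, Matrix.mul_add]
      have h1 : θᵀ * Xtᵀ * Θ = 0 := by rw [Matrix.mul_assoc, hXtΘ, Matrix.mul_zero]
      have h2 : Θᵀ * (Xt * θ) = 0 := by rw [← Matrix.mul_assoc, horth, Matrix.zero_mul]
      rw [show θᵀ * Xtᵀ * (Xt * θ) = θᵀ * (Xtᵀ * Xt) * θ by
        rw [Matrix.mul_assoc, Matrix.mul_assoc, Matrix.mul_assoc], h1, h2]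
      abel
    · rw [hA, Matrix.transpose_add, Matrix.transpose_mul, Matrix.add_mul, horth,
        Matrix.mul_assoc]
      abel
    · rw [hA, Matrix.mul_add, hXtΘ, ← Matrix.mul_assoc]
      abel
    · rw [hA]
  -- block inverse
  set N : Matrix (Fin L ⊕ Fin k) (Fin L ⊕ Fin k) ℝ :=
    Matrix.fromBlocks B⁻¹ (-(B⁻¹ * θᵀ)) (-(θ * B⁻¹)) (A⁻¹ + θ * B⁻¹ * θᵀ) with hN
  have hright : (Wᵀ * W) * N = 1 := by
    rw [hWW, hN, Matrix.fromBlocks_multiply, ← Matrix.fromBlocks_one,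
      Matrix.fromBlocks_inj]
    refine ⟨?_, ?_, ?_, ?_⟩
    · -- (θᵀAθ + B) B⁻¹ + θᵀA (-(θB⁻¹)) = 1
      rw [Matrix.mul_neg, Matrix.add_mul, hB', Matrix.mul_assoc (θᵀ * A) θ B⁻¹]
      abel
    · -- (θᵀAθ + B)(-(B⁻¹θᵀ)) + θᵀA(A⁻¹ + θB⁻¹θᵀ) = 0
      rw [Matrix.mul_neg, Matrix.add_mul, Matrix.mul_add]
      rw [show B * (B⁻¹ * θᵀ) = θᵀ by rw [← Matrix.mul_assoc, hB', Matrix.one_mul]]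
      rw [show θᵀ * A * A⁻¹ = θᵀ by rw [Matrix.mul_assoc, hA', Matrix.mul_one]]
      rw [show θᵀ * A * θ * (B⁻¹ * θᵀ) = θᵀ * A * (θ * (B⁻¹ * θᵀ)) by
        rw [Matrix.mul_assoc]]
      rw [show θᵀ * A * (θ * B⁻¹ * θᵀ) = θᵀ * A * (θ * (B⁻¹ * θᵀ)) by
        rw [Matrix.mul_assoc θ B⁻¹ θᵀ]]
      abel
    · -- Aθ B⁻¹ + A(-(θB⁻¹)) = 0
      rw [Matrix.mul_neg, Matrix.mul_assoc]
      abel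
    · -- Aθ(-(B⁻¹θᵀ)) + A(A⁻¹ + θB⁻¹θᵀ) = 1
      rw [Matrix.mul_neg, Matrix.mul_add, hA']
      rw [show A * θ * (B⁻¹ * θᵀ) = A * (θ * (B⁻¹ * θᵀ)) by rw [Matrix.mul_assoc]]
      rw [show A * (θ * B⁻¹ * θᵀ) = A * (θ * (B⁻¹ * θᵀ)) by
        rw [Matrix.mul_assoc θ B⁻¹ θᵀ]]
      abel
  have hinv : (Wᵀ * W)⁻¹ = N := Matrix.inv_eq_right_inv hright
  -- pass to the L2 operator norm
  rw [hinv, opN_eq_norm, opN_eq_norm, opN_eq_norm, opN_eq_norm]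
  have h1 : ‖N‖ ≤ ‖B⁻¹‖ + ‖-(B⁻¹ * θᵀ)‖ + ‖-(θ * B⁻¹)‖ + ‖A⁻¹ + θ * B⁻¹ * θᵀ‖ := by
    rw [hN]
    exact norm_fromBlocks_le _ _ _ _
  have hθt : ‖θᵀ‖ = ‖θ‖ := norm_transpose_real θ
  have h2 : ‖-(B⁻¹ * θᵀ)‖ ≤ ‖B⁻¹‖ * ‖θ‖ := by
    rw [norm_neg, ← hθt]
    exact Matrix.l2_opNorm_mul _ _
  have h3 : ‖-(θ * B⁻¹)‖ ≤ ‖θ‖ * ‖B⁻¹‖ := by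
    rw [norm_neg]
    exact Matrix.l2_opNorm_mul _ _
  have h4 : ‖A⁻¹ + θ * B⁻¹ * θᵀ‖ ≤ ‖A⁻¹‖ + ‖θ‖ * ‖B⁻¹‖ * ‖θ‖ := by
    calc ‖A⁻¹ + θ * B⁻¹ * θᵀ‖ ≤ ‖A⁻¹‖ + ‖θ * B⁻¹ * θᵀ‖ := norm_add_le _ _
      _ ≤ ‖A⁻¹‖ + ‖θ * B⁻¹‖ * ‖θᵀ‖ :=
          add_le_add (le_refl _) (Matrix.l2_opNorm_mul _ _)
      _ ≤ ‖A⁻¹‖ + ‖θ‖ * ‖B⁻¹‖ * ‖θ‖ := by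
          rw [hθt]
          have := Matrix.l2_opNorm_mul θ B⁻¹
          nlinarith [norm_nonneg θ, norm_nonneg (B⁻¹), norm_nonneg (θ * B⁻¹)]
  calc ‖N‖ ≤ ‖B⁻¹‖ + ‖B⁻¹‖ * ‖θ‖ + ‖θ‖ * ‖B⁻¹‖ + (‖A⁻¹‖ + ‖θ‖ * ‖B⁻¹‖ * ‖θ‖) := by
        linarith [h1, h2, h3, h4]
    _ = ‖B⁻¹‖ * (1 + ‖θ‖) ^ 2 + ‖A⁻¹‖ := by ring
end
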